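/- arXiv:2402.00420 — 7 statements merged into one kernel-verified Lean document; each statement's English description precedes it below -/
import Mathlib

section
/- Let r > 0 and H > 1 be real numbers. Define Λ = (H² + 6H + 11)/(3r²(H + 3)), E = (H² + 6H + 11)/(12r), p² = 4/(r(H + 3)), B = r·√((H − 1)(H + 4)/(6(H + 3))), and q = −√((H − 1)(H + 3)(H + 4))/(√24 · r). Then these values satisfy the reduced Einstein–Dirac–Maxwell system: (Maxwell) p² = −2B/(q r³); (Dirac) −E + (H + 5 − 4qB)/(4r) = 0; (Einstein 00) (2 + H)/r² − Λ = 2B²/r⁴ + E·p²; (Einstein 11) −H/r² + Λ = −2B²/r⁴ + (H + 1 + 4qB)·p²/(4r); (Einstein 22) −1/r² + Λ = 2B²/r⁴ + p²/(2r). -/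
/-- The explicit values Λ, E, p², B, q solve the reduced
Einstein–Dirac–Maxwell system (Maxwell, Dirac, Einstein 00/11/22 equations). -/
theorem stmt_0 (r H : ℝ) (hr : 0 < r) (hH : 1 < H)
    (Λ E p2 B q : ℝ)
    (hΛ : Λ = (H ^ 2 + 6 * H + 11) / (3 * r ^ 2 * (H + 3)))
    (hE : E = (H ^ 2 + 6 * H + 11) / (12 * r))
    (hp2 : p2 = 4 / (r * (H + 3)))
    (hB : B = r * Real.sqrt ((H - 1) * (H + 4) / (6 * (H + 3))))
    (hq : q = - Real.sqrt ((H - 1) * (H + 3) * (H + 4)) / (Real.sqrt 24 * r)) :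
    p2 = -2 * B / (q * r ^ 3) ∧
    -E + (H + 5 - 4 * q * B) / (4 * r) = 0 ∧
    (2 + H) / r ^ 2 - Λ = 2 * B ^ 2 / r ^ 4 + E * p2 ∧
    -H / r ^ 2 + Λ = -2 * B ^ 2 / r ^ 4 + (H + 1 + 4 * q * B) * p2 / (4 * r) ∧
    -1 / r ^ 2 + Λ = 2 * B ^ 2 / r ^ 4 + p2 / (2 * r) := by
  have hr0 : r ≠ 0 := ne_of_gt hr
  have h1 : (0:ℝ) < H - 1 := by linarith
  have h3 : (0:ℝ) < H + 3 := by linarith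
  have h4 : (0:ℝ) < H + 4 := by linarith
  have harg : (0:ℝ) ≤ (H - 1) * (H + 4) / (6 * (H + 3)) := by positivity
  have harg2 : (0:ℝ) ≤ (H - 1) * (H + 3) * (H + 4) := by positivity
  have hB2 : B ^ 2 = r ^ 2 * ((H - 1) * (H + 4) / (6 * (H + 3))) := by
    rw [hB, mul_pow, Real.sq_sqrt harg]
  have hq2 : q ^ 2 = (H - 1) * (H + 3) * (H + 4) / (24 * r ^ 2) := by
    have e : q ^ 2 = (Real.sqrt ((H - 1) * (H + 3) * (H + 4))) ^ 2 /
        ((Real.sqrt 24) ^ 2 * r ^ 2) := by rw [hq]; ring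
    rw [e, Real.sq_sqrt harg2, Real.sq_sqrt (by norm_num : (0:ℝ) ≤ 24)]
  have hqB2 : (q * B) ^ 2 = ((H - 1) * (H + 4) / 12) ^ 2 := by
    rw [mul_pow, hq2, hB2]; field_simp; ring
  have hqnp : q ≤ 0 := by
    rw [hq]
    apply div_nonpos_of_nonpos_of_nonneg
    · simp [Real.sqrt_nonneg]
    · positivity
  have hBnn : 0 ≤ B := by rw [hB]; positivity
  have hqB : q * B = -((H - 1) * (H + 4) / 12) := by
    have habs : |q * B| = |(H - 1) * (H + 4) / 12| := by
      rw [← Real.sqrt_sq_eq_abs, ← Real.sqrt_sq_eq_abs, hqB2]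
    rw [abs_of_nonpos (mul_nonpos_of_nonpos_of_nonneg hqnp hBnn),
        abs_of_nonneg (by positivity)] at habs
    linarith
  have hqne : q ≠ 0 := by
    intro h
    rw [h] at hq2
    have : (H - 1) * (H + 3) * (H + 4) / (24 * r ^ 2) > 0 := by positivity
    simp at hq2; linarith
  refine ⟨?_, ?_, ?_, ?_, ?_⟩
  · rw [eq_div_iff (by positivity : q * r ^ 3 ≠ 0)]
    apply mul_left_cancel₀ hqne
    have e1 : q * (p2 * (q * r ^ 3)) = p2 * q ^ 2 * r ^ 3 := by ring
    have e2 : q * (-2 * B) = -2 * (q * B) := by ring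
    rw [e1, e2, hp2, hq2, hqB]
    field_simp
    ring
  · rw [hE, show (4:ℝ) * q * B = 4 * (q * B) by ring, hqB]
    field_simp
    ring
  · rw [hΛ, hE, hp2, hB2]
    field_simp
    ring
  · rw [hΛ, hp2, hB2, show (4:ℝ) * q * B = 4 * (q * B) by ring, hqB]
    field_simp
    ring
  · rw [hΛ, hp2, hB2]
    field_simp
    ring
end

section
/- Let r > 0 and H be real numbers with H + 3 ≠ 0, and let real numbers Λ, E, p², B, q with p² > 0, B ≠ 0 and q ≠ 0 satisfy the five equations: p² = −2B/(q r³); −E + (H + 5 − 4qB)/(4r) = 0; (2 + H)/r² − Λ = 2B²/r⁴ + E·p²; −H/r² + Λ = −2B²/r⁴ + (H + 1 + 4qB)·p²/(4r); −1/r² + Λ = 2B²/r⁴ + p²/(2r). Then necessarily Λ = (H² + 6H + 11)/(3r²(H + 3)), E = (H² + 6H + 11)/(12r), p² = 4/(r(H + 3)), B² = r²(H − 1)(H + 4)/(6(H + 3)), and q² = (H − 1)(H + 3)(H + 4)/(24r²). -/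
/-!
Clearing denominators turns the system into polynomial equations. Adding four times the
(0,0) Einstein equation to the (1,1) one and eliminating `E` with the Dirac equation makes the
coupling `q B` cancel, which leaves `p² r (H + 3) = 4`. The difference of the (2,2) and (1,1)
equations, with `B²` rewritten as `-q B p² r³ / 2` by the Maxwell equation, is then linear in
`q B` and gives `12 q B = (1 - H)(H + 4)`; every other unknown follows by back-substitution.
-/

/-- The reduced Einstein–Dirac–Maxwell system with denominators cleared. -/
structure ReducedEDM {K : Type*} [Field K] (r H Λ E p2 B q : K) : Prop where
  maxwell : p2 * q * r ^ 3 = -2 * B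
  dirac : 4 * E * r = H + 5 - 4 * q * B
  ein00 : (2 + H) * r ^ 2 - Λ * r ^ 4 = 2 * B ^ 2 + E * p2 * r ^ 4
  ein11 : -4 * H * r ^ 2 + 4 * Λ * r ^ 4 = -8 * B ^ 2 + (H + 1 + 4 * q * B) * p2 * r ^ 3
  ein22 : -4 * r ^ 2 + 4 * Λ * r ^ 4 = 8 * B ^ 2 + 2 * p2 * r ^ 3

namespace ReducedEDM

variable {K : Type*} [Field K] [CharZero K] {r H Λ E p2 B q : K}

theorem of_eqs (hr : r ≠ 0) (hq : q ≠ 0)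
    (maxwell : p2 = -2 * B / (q * r ^ 3))
    (dirac : -E + (H + 5 - 4 * q * B) / (4 * r) = 0)
    (ein00 : (2 + H) / r ^ 2 - Λ = 2 * B ^ 2 / r ^ 4 + E * p2)
    (ein11 : -H / r ^ 2 + Λ = -2 * B ^ 2 / r ^ 4 + (H + 1 + 4 * q * B) * p2 / (4 * r))
    (ein22 : -1 / r ^ 2 + Λ = 2 * B ^ 2 / r ^ 4 + p2 / (2 * r)) :
    ReducedEDM r H Λ E p2 B q where
  maxwell := by rw [maxwell]; field_simp
  dirac := by field_simp at dirac; linear_combination -dirac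
  ein00 := mul_right_cancel₀ (pow_ne_zero 2 hr) <| by
    field_simp at ein00; linear_combination r ^ 2 * ein00
  ein11 := mul_right_cancel₀ (pow_ne_zero 3 hr) <| by
    field_simp at ein11; linear_combination r ^ 3 * ein11
  ein22 := mul_right_cancel₀ (pow_ne_zero 3 hr) <| by
    field_simp at ein22; linear_combination 2 * r ^ 3 * ein22

theorem p2_mul (h : ReducedEDM r H Λ E p2 B q) (hr : r ≠ 0) : p2 * (r * (H + 3)) = 4 := by
  refine mul_right_cancel₀ (by simpa using pow_ne_zero 2 hr : 2 * r ^ 2 ≠ 0) ?_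
  linear_combination -4 * h.ein00 - h.ein11 - p2 * r ^ 3 * h.dirac

theorem coupling (h : ReducedEDM r H Λ E p2 B q) (hr : r ≠ 0) :
    12 * (q * B) = (1 - H) * (H + 4) := by
  have hB2 : 4 * (H - 1) * r ^ 2 = (1 - H - 12 * (q * B)) * p2 * r ^ 3 := by
    linear_combination h.ein22 - h.ein11 + 8 * B * h.maxwell
  refine mul_right_cancel₀ (by simpa using pow_ne_zero 2 hr : 4 * r ^ 2 ≠ 0) ?_
  linear_combination (H + 3) * hB2 + (1 - H - 12 * (q * B)) * r ^ 2 * h.p2_mul hr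

theorem B_sq (h : ReducedEDM r H Λ E p2 B q) (hr : r ≠ 0) :
    B ^ 2 * (6 * (H + 3)) = r ^ 2 * (H - 1) * (H + 4) := by
  linear_combination 3 * (H + 3) * B * h.maxwell - 3 * (q * B) * r ^ 2 * h.p2_mul hr
    - r ^ 2 * h.coupling hr

theorem E_mul (h : ReducedEDM r H Λ E p2 B q) (hr : r ≠ 0) :
    E * (12 * r) = H ^ 2 + 6 * H + 11 := by
  linear_combination 3 * h.dirac - h.coupling hr

theorem Λ_mul (h : ReducedEDM r H Λ E p2 B q) (hr : r ≠ 0) :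
    Λ * (3 * r ^ 2 * (H + 3)) = H ^ 2 + 6 * H + 11 := by
  refine mul_right_cancel₀ (by simpa using pow_ne_zero 2 hr : 4 * r ^ 2 ≠ 0) ?_
  linear_combination 3 * (H + 3) * h.ein22 + 4 * h.B_sq hr + 6 * r ^ 2 * h.p2_mul hr

theorem q_sq (h : ReducedEDM r H Λ E p2 B q) (hr : r ≠ 0) :
    q ^ 2 * (24 * r ^ 2) = (H - 1) * (H + 3) * (H + 4) := by
  have hq : q ^ 2 * (16 * r ^ 4) = 4 * B ^ 2 * (H + 3) ^ 2 := by
    linear_combination (p2 * q * r ^ 3 - 2 * B) * (H + 3) ^ 2 * h.maxwell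
      - q ^ 2 * r ^ 4 * (p2 * (r * (H + 3)) + 4) * h.p2_mul hr
  refine mul_right_cancel₀ (by simpa using pow_ne_zero 2 hr : 2 * r ^ 2 ≠ 0) ?_
  linear_combination 3 * hq + 2 * (H + 3) * h.B_sq hr

end ReducedEDM

theorem stmt_1_general (r H Λ E p2 B q : ℝ) (hr : 0 < r) (hH3 : H + 3 ≠ 0)
    (hq : q ≠ 0)
    (maxwell : p2 = -2 * B / (q * r ^ 3))
    (dirac : -E + (H + 5 - 4 * q * B) / (4 * r) = 0)
    (ein00 : (2 + H) / r ^ 2 - Λ = 2 * B ^ 2 / r ^ 4 + E * p2)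
    (ein11 : -H / r ^ 2 + Λ = -2 * B ^ 2 / r ^ 4 + (H + 1 + 4 * q * B) * p2 / (4 * r))
    (ein22 : -1 / r ^ 2 + Λ = 2 * B ^ 2 / r ^ 4 + p2 / (2 * r)) :
    Λ = (H ^ 2 + 6 * H + 11) / (3 * r ^ 2 * (H + 3)) ∧
    E = (H ^ 2 + 6 * H + 11) / (12 * r) ∧
    p2 = 4 / (r * (H + 3)) ∧
    B ^ 2 = r ^ 2 * (H - 1) * (H + 4) / (6 * (H + 3)) ∧
    q ^ 2 = (H - 1) * (H + 3) * (H + 4) / (24 * r ^ 2) := by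
  have hr0 : r ≠ 0 := hr.ne'
  have h := ReducedEDM.of_eqs hr0 hq maxwell dirac ein00 ein11 ein22
  refine ⟨?_, ?_, ?_, ?_, ?_⟩
  · rw [eq_div_iff (by positivity)]; exact h.Λ_mul hr0
  · rw [eq_div_iff (by positivity)]; exact h.E_mul hr0
  · rw [eq_div_iff (by positivity)]; exact h.p2_mul hr0
  · rw [eq_div_iff (by positivity)]; exact h.B_sq hr0
  · rw [eq_div_iff (by positivity)]; exact h.q_sq hr0

/-- any solution of the reduced Einstein–Dirac–Maxwell system with
p² > 0, B ≠ 0, q ≠ 0 necessarily has the stated values of Λ, E, p², B², q². -/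
theorem stmt_1 (r H Λ E p2 B q : ℝ) (hr : 0 < r) (hH3 : H + 3 ≠ 0)
    (hp2pos : 0 < p2) (hB : B ≠ 0) (hq : q ≠ 0)
    (maxwell : p2 = -2 * B / (q * r ^ 3))
    (dirac : -E + (H + 5 - 4 * q * B) / (4 * r) = 0)
    (ein00 : (2 + H) / r ^ 2 - Λ = 2 * B ^ 2 / r ^ 4 + E * p2)
    (ein11 : -H / r ^ 2 + Λ = -2 * B ^ 2 / r ^ 4 + (H + 1 + 4 * q * B) * p2 / (4 * r))
    (ein22 : -1 / r ^ 2 + Λ = 2 * B ^ 2 / r ^ 4 + p2 / (2 * r)) :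
    Λ = (H ^ 2 + 6 * H + 11) / (3 * r ^ 2 * (H + 3)) ∧
    E = (H ^ 2 + 6 * H + 11) / (12 * r) ∧
    p2 = 4 / (r * (H + 3)) ∧
    B ^ 2 = r ^ 2 * (H - 1) * (H + 4) / (6 * (H + 3)) ∧
    q ^ 2 = (H - 1) * (H + 3) * (H + 4) / (24 * r ^ 2) :=
  stmt_1_general r H Λ E p2 B q hr hH3 hq maxwell dirac ein00 ein11 ein22
end

section
/- Let r > 0 and H be real numbers, and let real numbers Λ, E, p², B, q satisfy the Dirac equation −E + (H + 5 − 4qB)/(4r) = 0 together with the two Einstein equations (2 + H)/r² − Λ = 2B²/r⁴ + E·p² and −H/r² + Λ = −2B²/r⁴ + (H + 1 + 4qB)·p²/(4r). If p² ≠ 0, then H + 3 ≠ 0 and p² = 4/(r(H + 3)). -/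
/-! Adding the two Einstein equations cancels Λ and the magnetic energy `2B²/r⁴`, leaving
`2/r² = (E + (H + 1 + 4qB)/(4r)) p²`. The Dirac equation turns the bracket into `(H + 3)/(2r)`,
the charge terms `∓4qB` cancelling, so `r (H + 3) p² = 4`. -/

theorem p2_mul_r_mul_H_add_three_eq_four {r H Λ E p2 B q : ℝ} (hr : r ≠ 0)
    (dirac : -E + (H + 5 - 4 * q * B) / (4 * r) = 0)
    (ein00 : (2 + H) / r ^ 2 - Λ = 2 * B ^ 2 / r ^ 4 + E * p2)
    (ein11 : -H / r ^ 2 + Λ = -2 * B ^ 2 / r ^ 4 + (H + 1 + 4 * q * B) * p2 / (4 * r)) :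
    p2 * (r * (H + 3)) = 4 := by
  have hE : E = (H + 5 - 4 * q * B) / (4 * r) := by linarith
  have hsum : 2 / r ^ 2 = E * p2 + (H + 1 + 4 * q * B) * p2 / (4 * r) := by
    linear_combination ein00 + ein11
  rw [hE] at hsum
  field_simp at hsum
  linear_combination -hsum / 2

theorem stmt_2_general (r H Λ E p2 B q : ℝ) (hr : 0 < r)
    (dirac : -E + (H + 5 - 4 * q * B) / (4 * r) = 0)
    (ein00 : (2 + H) / r ^ 2 - Λ = 2 * B ^ 2 / r ^ 4 + E * p2)
    (ein11 : -H / r ^ 2 + Λ = -2 * B ^ 2 / r ^ 4 + (H + 1 + 4 * q * B) * p2 / (4 * r)) :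
    H + 3 ≠ 0 ∧ p2 = 4 / (r * (H + 3)) := by
  have key := p2_mul_r_mul_H_add_three_eq_four hr.ne' dirac ein00 ein11
  have hprod : r * (H + 3) ≠ 0 := right_ne_zero_of_mul (key ▸ four_ne_zero)
  exact ⟨right_ne_zero_of_mul hprod, eq_div_of_mul_eq hprod key⟩

/-- the Dirac equation together with the (00) and (11) Einstein
equations and p² ≠ 0 force H + 3 ≠ 0 and p² = 4/(r(H+3)). -/
theorem stmt_2 (r H Λ E p2 B q : ℝ) (hr : 0 < r)
    (dirac : -E + (H + 5 - 4 * q * B) / (4 * r) = 0)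
    (ein00 : (2 + H) / r ^ 2 - Λ = 2 * B ^ 2 / r ^ 4 + E * p2)
    (ein11 : -H / r ^ 2 + Λ = -2 * B ^ 2 / r ^ 4 + (H + 1 + 4 * q * B) * p2 / (4 * r))
    (hp2 : p2 ≠ 0) :
    H + 3 ≠ 0 ∧ p2 = 4 / (r * (H + 3)) :=
  stmt_2_general r H Λ E p2 B q hr dirac ein00 ein11
end

section
/- Let r > 0 and H be real numbers, and let real numbers Λ, E, p², B, q with p² > 0 satisfy the five equations: p² = −2B/(q r³); −E + (H + 5 − 4qB)/(4r) = 0; (2 + H)/r² − Λ = 2B²/r⁴ + E·p²; −H/r² + Λ = −2B²/r⁴ + (H + 1 + 4qB)·p²/(4r); −1/r² + Λ = 2B²/r⁴ + p²/(2r). Then qB = −(H − 1)(H + 4)/12. -/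
/-!
Put `x = p² r` and `Q = q B`. Adding the first two Einstein equations and substituting `E` from the
Dirac equation gives the trace identity `(H + 3) x = 4`. The Maxwell equation turns `B² / r²` into
`-Q x / 2`, so the difference of the last two Einstein equations becomes `H - 1 = x (1 - H) / 4 - 3 Q x`,
i.e. `H = (1 - 3 Q) x` after the trace identity. Multiplying by `H + 3` eliminates `x`:
`H (H + 3) = 4 (1 - 3 Q)`.
-/

namespace EinsteinDiracMaxwell

variable {r H Λ E p2 B q : ℝ}

theorem q_ne_zero_of_maxwell (hp2 : p2 ≠ 0) (maxwell : p2 = -2 * B / (q * r ^ 3)) : q ≠ 0 := by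
  rintro rfl
  simp [maxwell] at hp2

theorem q_mul_pow_three_mul_eq_of_maxwell (hr : r ≠ 0) (hq : q ≠ 0)
    (maxwell : p2 = -2 * B / (q * r ^ 3)) : q * r ^ 3 * p2 = -2 * B := by
  rw [maxwell]
  field_simp

theorem trace_identity (hr : r ≠ 0)
    (dirac : -E + (H + 5 - 4 * q * B) / (4 * r) = 0)
    (ein00 : (2 + H) / r ^ 2 - Λ = 2 * B ^ 2 / r ^ 4 + E * p2)
    (ein11 : -H / r ^ 2 + Λ = -2 * B ^ 2 / r ^ 4 + (H + 1 + 4 * q * B) * p2 / (4 * r)) :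
    (H + 3) * (p2 * r) = 4 := by
  obtain rfl : E = (H + 5 - 4 * q * B) / (4 * r) := by linarith
  have hsum : 2 / r ^ 2 = (H + 3) * p2 / (2 * r) := by linear_combination ein00 + ein11
  field_simp at hsum
  linear_combination -hsum

theorem H_eq_of_einstein (hr : r ≠ 0) (hm : q * r ^ 3 * p2 = -2 * B)
    (trace : (H + 3) * (p2 * r) = 4)
    (ein11 : -H / r ^ 2 + Λ = -2 * B ^ 2 / r ^ 4 + (H + 1 + 4 * q * B) * p2 / (4 * r))
    (ein22 : -1 / r ^ 2 + Λ = 2 * B ^ 2 / r ^ 4 + p2 / (2 * r)) :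
    H = (1 - 3 * (q * B)) * (p2 * r) := by
  have hdiff : (H - 1) / r ^ 2 =
      4 * B ^ 2 / r ^ 4 + p2 / (2 * r) - (H + 1 + 4 * q * B) * p2 / (4 * r) := by
    linear_combination ein22 - ein11
  field_simp at hdiff
  have key : r ^ 2 * (H - (1 - 3 * (q * B)) * (p2 * r)) = 0 := by
    linear_combination hdiff / 8 + 2 * B * hm - r ^ 2 / 4 * trace
  exact sub_eq_zero.mp ((mul_eq_zero.mp key).resolve_left (pow_ne_zero 2 hr))

theorem qB_eq_of_reduced {x Q : ℝ} (trace : (H + 3) * x = 4) (hH : H = (1 - 3 * Q) * x) :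
    Q = -(H - 1) * (H + 4) / 12 := by
  linear_combination ((H + 3) * hH + (1 - 3 * Q) * trace) / 12

end EinsteinDiracMaxwell

/-- the full reduced Einstein–Dirac–Maxwell system with p² > 0
forces qB = −(H − 1)(H + 4)/12. -/
theorem stmt_3 (r H Λ E p2 B q : ℝ) (hr : 0 < r) (hp2pos : 0 < p2)
    (maxwell : p2 = -2 * B / (q * r ^ 3))
    (dirac : -E + (H + 5 - 4 * q * B) / (4 * r) = 0)
    (ein00 : (2 + H) / r ^ 2 - Λ = 2 * B ^ 2 / r ^ 4 + E * p2)
    (ein11 : -H / r ^ 2 + Λ = -2 * B ^ 2 / r ^ 4 + (H + 1 + 4 * q * B) * p2 / (4 * r))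
    (ein22 : -1 / r ^ 2 + Λ = 2 * B ^ 2 / r ^ 4 + p2 / (2 * r)) :
    q * B = -(H - 1) * (H + 4) / 12 := by
  open EinsteinDiracMaxwell in
  have hr0 : r ≠ 0 := hr.ne'
  have hm :=
    q_mul_pow_three_mul_eq_of_maxwell hr0 (q_ne_zero_of_maxwell hp2pos.ne' maxwell) maxwell
  have trace := trace_identity hr0 dirac ein00 ein11
  exact qB_eq_of_reduced trace (H_eq_of_einstein hr0 hm trace ein11 ein22)
end

section
/- Let r > 0 and H be real numbers, and let real numbers Λ, E, p², B, q satisfy the five equations: p² = −2B/(q r³); −E + (H + 5 − 4qB)/(4r) = 0; (2 + H)/r² − Λ = 2B²/r⁴ + E·p²; −H/r² + Λ = −2B²/r⁴ + (H + 1 + 4qB)·p²/(4r); −1/r² + Λ = 2B²/r⁴ + p²/(2r). If p² > 0 then H > −3; if moreover B ≠ 0 and q ≠ 0, then H > 1. -/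
/-!
Adding the first two Einstein equations eliminates Λ and B², and substituting the Dirac
equation for E also eliminates the product qB, leaving `(H + 3) p² r = 4`; so `p² > 0` forces
`H > -3`. Subtracting the third Einstein equation from the second eliminates Λ, and the Maxwell
equation turns `qB p²` into `-2B²/r³`, leaving `(H - 1)(4 + p² r) = 24 B²/r²`; so `p² > 0`
and `B ≠ 0` force `H > 1`.
-/

section ReducedSystem

variable {r H Λ E p2 B q : ℝ}

theorem add_three_mul_p2_mul_r_eq_four (hr : r ≠ 0)
    (dirac : -E + (H + 5 - 4 * q * B) / (4 * r) = 0)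
    (ein00 : (2 + H) / r ^ 2 - Λ = 2 * B ^ 2 / r ^ 4 + E * p2)
    (ein11 : -H / r ^ 2 + Λ = -2 * B ^ 2 / r ^ 4 + (H + 1 + 4 * q * B) * p2 / (4 * r)) :
    (H + 3) * (p2 * r) = 4 := by
  linear_combination (norm := (field_simp; ring)) (-2 * r ^ 2) * (ein00 + ein11 - p2 * dirac)

theorem sub_one_mul_four_add_p2_mul_r_eq (hr : r ≠ 0) (hq : q ≠ 0)
    (maxwell : p2 = -2 * B / (q * r ^ 3))
    (ein11 : -H / r ^ 2 + Λ = -2 * B ^ 2 / r ^ 4 + (H + 1 + 4 * q * B) * p2 / (4 * r))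
    (ein22 : -1 / r ^ 2 + Λ = 2 * B ^ 2 / r ^ 4 + p2 / (2 * r)) :
    (H - 1) * (4 + p2 * r) = 24 * (B / r) ^ 2 := by
  linear_combination (norm := (field_simp; ring))
    (4 * r ^ 2) * (ein22 - ein11) - 4 * q * B * r * maxwell

end ReducedSystem

/-- for solutions of the reduced system, p² > 0 forces H > −3
(Berger sphere), and additionally B ≠ 0, q ≠ 0 force H > 1. -/
theorem stmt_4 (r H Λ E p2 B q : ℝ) (hr : 0 < r)
    (maxwell : p2 = -2 * B / (q * r ^ 3))
    (dirac : -E + (H + 5 - 4 * q * B) / (4 * r) = 0)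
    (ein00 : (2 + H) / r ^ 2 - Λ = 2 * B ^ 2 / r ^ 4 + E * p2)
    (ein11 : -H / r ^ 2 + Λ = -2 * B ^ 2 / r ^ 4 + (H + 1 + 4 * q * B) * p2 / (4 * r))
    (ein22 : -1 / r ^ 2 + Λ = 2 * B ^ 2 / r ^ 4 + p2 / (2 * r)) :
    (0 < p2 → -3 < H) ∧ (0 < p2 → B ≠ 0 → q ≠ 0 → 1 < H) := by
  refine ⟨fun hp2 => ?_, fun hp2 hB hq => ?_⟩
  · have htrace := add_three_mul_p2_mul_r_eq_four hr.ne' dirac ein00 ein11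
    have : 0 < H + 3 := pos_of_mul_pos_left (htrace ▸ four_pos) (mul_pos hp2 hr).le
    linarith
  · have hdiff := sub_one_mul_four_add_p2_mul_r_eq hr.ne' hq maxwell ein11 ein22
    have hpos : 0 < (H - 1) * (4 + p2 * r) := hdiff ▸ by positivity
    have : 0 < H - 1 := pos_of_mul_pos_left hpos (by positivity)
    linarith
end

section
/- Let r > 0 and H > 1 be real numbers, and set p² = 4/(r(H + 3)), B = r·√((H − 1)(H + 4)/(6(H + 3))), q = −√((H − 1)(H + 3)(H + 4))/(√24 · r). Then q·p²·r³ = −2B; that is, the Maxwell equation ∇ᵃF_{ab} = (total Dirac current)_b, which reduces to 4B/r³ = −q p² along the Reeb direction, holds for these values. -/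
theorem Real.sqrt_div_mul_eq {k c : ℝ} (a : ℝ) (hk : 0 < k) (hc : 0 < c) :
    √(a / (k * c)) = √(a * c) / (√k * c) := by
  have hsq : √(k * c ^ 2) = √k * c := by
    rw [Real.sqrt_mul hk.le, Real.sqrt_sq hc.le]
  rw [← hsq, ← Real.sqrt_div' _ (by positivity)]
  congr 1
  field_simp

theorem sqrt_twentyFour : √24 = 2 * √6 := by
  rw [show (24 : ℝ) = 2 ^ 2 * 6 by norm_num, Real.sqrt_mul (by positivity),
    Real.sqrt_sq zero_le_two]

theorem stmt_14_general (r H : ℝ) (hH : 1 < H) (p2 B q : ℝ)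
    (hp2 : p2 = 4 / (r * (H + 3)))
    (hB : B = r * Real.sqrt ((H - 1) * (H + 4) / (6 * (H + 3))))
    (hq : q = - Real.sqrt ((H - 1) * (H + 3) * (H + 4)) / (Real.sqrt 24 * r)) :
    q * p2 * r ^ 3 = -2 * B := by
  have hH3 : 0 < H + 3 := by linarith
  rw [Real.sqrt_div_mul_eq _ (by norm_num) hH3, mul_right_comm] at hB
  rw [sqrt_twentyFour] at hq
  subst hp2 hB hq
  field_simp
  ring

/-- the explicit values of p², B, q satisfy the reduced Maxwell
equation q·p²·r³ = −2B. -/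
theorem stmt_14 (r H : ℝ) (hr : 0 < r) (hH : 1 < H) (p2 B q : ℝ)
    (hp2 : p2 = 4 / (r * (H + 3)))
    (hB : B = r * Real.sqrt ((H - 1) * (H + 4) / (6 * (H + 3))))
    (hq : q = - Real.sqrt ((H - 1) * (H + 3) * (H + 4)) / (Real.sqrt 24 * r)) :
    q * p2 * r ^ 3 = -2 * B :=
  stmt_14_general r H hH p2 B q hp2 hB hq
end

section
/- Let r > 0 and H be real numbers with H + 3 ≠ 0, and let real numbers Λ, E, p², B, q satisfy the two Einstein equations −H/r² + Λ = −2B²/r⁴ + (H + 1 + 4qB)·p²/(4r) and −1/r² + Λ = 2B²/r⁴ + p²/(2r), together with p² = 4/(r(H + 3)), and suppose additionally that q p² r³ = −2B. Then B² = (2r²/(H + 3))·(−qB), and if moreover qB = −(H − 1)(H + 4)/12, then B² = r²(H − 1)(H + 4)/(6(H + 3)) and q² = (H − 1)(H + 3)(H + 4)/(24 r²). -/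
/-- elimination step. Given the (11) and (22) Einstein equations
and p² = 4/(r(H+3)), the Maxwell relation q p² r³ = −2B yields
B² = (2r²/(H + 3))·(−qB); and once qB = −(H − 1)(H + 4)/12, the values of B²
and q² are determined. -/
theorem stmt_15 (r H Λ E p2 B q : ℝ) (hr : 0 < r) (hH3 : H + 3 ≠ 0)
    (ein11 : -H / r ^ 2 + Λ = -2 * B ^ 2 / r ^ 4 + (H + 1 + 4 * q * B) * p2 / (4 * r))
    (ein22 : -1 / r ^ 2 + Λ = 2 * B ^ 2 / r ^ 4 + p2 / (2 * r))
    (hp2 : p2 = 4 / (r * (H + 3))) :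
    (q * p2 * r ^ 3 = -2 * B → B ^ 2 = (2 * r ^ 2 / (H + 3)) * (-(q * B))) ∧
    (q * p2 * r ^ 3 = -2 * B → q * B = -(H - 1) * (H + 4) / 12 →
      B ^ 2 = r ^ 2 * (H - 1) * (H + 4) / (6 * (H + 3)) ∧
      q ^ 2 = (H - 1) * (H + 3) * (H + 4) / (24 * r ^ 2)) := by
  have hr0 : r ≠ 0 := ne_of_gt hr
  have key : ∀ _ : q * p2 * r ^ 3 = -2 * B, B ^ 2 = (2 * r ^ 2 / (H + 3)) * (-(q * B)) := by
    intro hmax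
    rw [hp2] at hmax
    have hB : B = -(2 * q * r ^ 2 / (H + 3)) := by
      field_simp at hmax ⊢
      apply mul_left_cancel₀ (show (2 * r : ℝ) ≠ 0 by positivity)
      linear_combination r * hmax
    rw [hB]
    field_simp
  refine ⟨key, fun hmax hqB => ?_⟩
  have h1 := key hmax
  rw [hqB] at h1
  constructor
  · rw [h1]; field_simp; ring
  · rw [hp2] at hmax
    have hB : B = -(2 * q * r ^ 2 / (H + 3)) := by
      field_simp at hmax ⊢
      apply mul_left_cancel₀ (show (2 * r : ℝ) ≠ 0 by positivity)
      linear_combination r * hmax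
    rw [hB] at hqB
    have : q ^ 2 * (24 * r ^ 2) = (H - 1) * (H + 3) * (H + 4) := by
      field_simp at hqB
      nlinarith [hqB]
    field_simp
    linarith [this]
end
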